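/- The directed circulant Circ(11; {3,4,9,10}) minus the two arcs (6,5) and (4,7) admits a decomposition into three directed 11-cycles together with two vertex-disjoint directed paths: a (5,6)-path of length 2 and a (7,4)-path of length 7. -/

import Mathlib

/-!
The decomposition is exhibited explicitly. Each arc set is the image of a finite enumeration,
so once the arc sets are rewritten as finsets every required property is a finite statement
about `ZMod 11 × ZMod 11` that the kernel evaluates by `decide`.
-/

/-- Arc set of the directed cycle on `Z_11` enumerated by `c`. -/
def cycArcs11 (c : ZMod 11 → ZMod 11) : Set (ZMod 11 × ZMod 11) :=
  {p | ∃ i : ZMod 11, p = (c i, c (i + 1))}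

/-- Arc set of the directed path with vertex sequence `p 0, p 1, …, p n`. -/
def pathArcs11 {n : ℕ} (p : Fin (n + 1) → ZMod 11) : Set (ZMod 11 × ZMod 11) :=
  {q | ∃ i : Fin n, q = (p i.castSucc, p i.succ)}

open Finset Function

def cycArcFinset (c : ZMod 11 → ZMod 11) : Finset (ZMod 11 × ZMod 11) :=
  univ.image fun i => (c i, c (i + 1))

def pathArcFinset {n : ℕ} (p : Fin (n + 1) → ZMod 11) : Finset (ZMod 11 × ZMod 11) :=
  univ.image fun i : Fin n => (p i.castSucc, p i.succ)

@[simp]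
lemma coe_cycArcFinset (c : ZMod 11 → ZMod 11) : ↑(cycArcFinset c) = cycArcs11 c := by
  ext
  simp [cycArcFinset, cycArcs11, eq_comm]

@[simp]
lemma coe_pathArcFinset {n : ℕ} (p : Fin (n + 1) → ZMod 11) :
    ↑(pathArcFinset p) = pathArcs11 p := by
  ext
  simp [pathArcFinset, pathArcs11, eq_comm]

lemma pairwise_disjoint_of_eq_coe {ι α : Type*} {S : ι → Set α} (F : ι → Finset α)
    (hS : ∀ i, ↑(F i) = S i) (hF : Pairwise (Disjoint on F)) : Pairwise (Disjoint on S) := by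
  intro i j hij
  rw [onFun, ← hS, ← hS, Finset.disjoint_coe]
  exact hF hij

def decompCycle : Fin 3 → ZMod 11 → ZMod 11 :=
  ![![0, 3, 7, 5, 4, 8, 6, 9, 1, 10, 2],
    ![0, 4, 2, 6, 10, 3, 1, 5, 9, 8, 7],
    ![0, 10, 9, 7, 6, 4, 3, 2, 5, 8, 1]]

def decompPath₁ : Fin 3 → ZMod 11 := ![5, 3, 6]

def decompPath₂ : Fin 8 → ZMod 11 := ![7, 10, 8, 0, 9, 2, 1, 4]

lemma pairwise_disjoint_decomp_arcs :
    Pairwise (onFun Disjoint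
      ![cycArcs11 (decompCycle 0), cycArcs11 (decompCycle 1), cycArcs11 (decompCycle 2),
        pathArcs11 decompPath₁, pathArcs11 decompPath₂]) := by
  refine pairwise_disjoint_of_eq_coe
    ![cycArcFinset (decompCycle 0), cycArcFinset (decompCycle 1), cycArcFinset (decompCycle 2),
      pathArcFinset decompPath₁, pathArcFinset decompPath₂] (by simp [Fin.forall_fin_succ]) ?_
  unfold Pairwise onFun
  decide

set_option maxRecDepth 10000 in
lemma decomp_arcs_union :
    cycArcs11 (decompCycle 0) ∪ cycArcs11 (decompCycle 1) ∪ cycArcs11 (decompCycle 2) ∪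
        pathArcs11 decompPath₁ ∪ pathArcs11 decompPath₂ =
      {q : ZMod 11 × ZMod 11 | q.2 - q.1 ∈ ({3, 4, 9, 10} : Set (ZMod 11))} \
        {((6 : ZMod 11), (5 : ZMod 11)), ((4 : ZMod 11), (7 : ZMod 11))} := by
  simp only [← coe_cycArcFinset, ← coe_pathArcFinset, ← Finset.coe_union]
  ext q
  simp only [Finset.mem_coe, Set.mem_sdiff, Set.mem_ofPred_eq, Set.mem_insert_iff,
    Set.mem_singleton_iff]
  revert q
  decide

theorem circ11_decomposition :
    ∃ (c : Fin 3 → ZMod 11 → ZMod 11) (p₁ : Fin 3 → ZMod 11) (p₂ : Fin 8 → ZMod 11),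
      (∀ t, Function.Injective (c t)) ∧
      Function.Injective p₁ ∧ Function.Injective p₂ ∧
      p₁ 0 = 5 ∧ p₁ 2 = 6 ∧ p₂ 0 = 7 ∧ p₂ 7 = 4 ∧
      Disjoint (Set.range p₁) (Set.range p₂) ∧
      Pairwise (Function.onFun Disjoint
        ![cycArcs11 (c 0), cycArcs11 (c 1), cycArcs11 (c 2),
          pathArcs11 (n := 2) p₁, pathArcs11 (n := 7) p₂]) ∧
      cycArcs11 (c 0) ∪ cycArcs11 (c 1) ∪ cycArcs11 (c 2) ∪
          pathArcs11 (n := 2) p₁ ∪ pathArcs11 (n := 7) p₂ =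
        {q : ZMod 11 × ZMod 11 | q.2 - q.1 ∈ ({3, 4, 9, 10} : Set (ZMod 11))} \
          {((6 : ZMod 11), (5 : ZMod 11)), ((4 : ZMod 11), (7 : ZMod 11))} :=
  ⟨decompCycle, decompPath₁, decompPath₂, by decide, by decide, by decide, rfl, rfl, rfl, rfl,
    Set.disjoint_left.mpr (by decide), pairwise_disjoint_decomp_arcs, decomp_arcs_union⟩
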